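/- arXiv:2211.00084 — 5 statements merged into one kernel-verified Lean document; each statement's English description precedes it below -/
import Mathlib

section
/- Let γ, c_f, d be complex numbers with γ ≠ 0. Then for every integer j ≥ 1 and every k ∈ {0, 1, …, j−1}, the j-th Faber polynomial vanishes at the point r_k = d + c_f·cos((1 + 2k)π/(2j)); that is, F_j(d + c_f·cos((1+2k)π/(2j))) = 0, so these j points are the roots of F_j. -/
/-!
Along the line `z = d + cf * w` the Faber recurrence is the Chebyshev recurrence rescaled by
`a = cf / (2γ)`, so `F_{n+1}(d + cf * w) = 2 a^(n+1) T_{n+1}(w)`. Evaluating at `w = cos θ` gives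
`2 a^j cos (jθ)`, and `cos (jθ)` vanishes at `θ = (1 + 2k)π / (2j)`.
-/

/-- The Faber polynomials associated with parameters `γ`, `cf`, `d`. -/
noncomputable def faber (γ cf d : ℂ) : ℕ → ℂ → ℂ
  | 0 => fun _ => 1
  | 1 => fun z => z / γ - d / γ
  | 2 => fun z => (z / γ - d / γ) ^ 2 - 2 * (cf ^ 2 / (4 * γ ^ 2))
  | n + 3 => fun z =>
      (z / γ - d / γ) * faber γ cf d (n + 2) z - cf ^ 2 / (4 * γ ^ 2) * faber γ cf d (n + 1) z

open Polynomial Polynomial.Chebyshev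

theorem faber_succ_eval_affine (γ cf d w : ℂ) (n : ℕ) :
    faber γ cf d (n + 1) (d + cf * w) = 2 * (cf / (2 * γ)) ^ (n + 1) * (T ℂ ↑(n + 1)).eval w := by
  have hF₁ : (d + cf * w) / γ - d / γ = 2 * (cf / (2 * γ)) * w := by ring
  have hc₁ : cf ^ 2 / (4 * γ ^ 2) = (cf / (2 * γ)) ^ 2 := by ring
  induction n using Nat.twoStepInduction with
  | zero => simp [faber, hF₁]
  | one =>
    simp only [faber, hF₁, hc₁, show ((1 + 1 : ℕ) : ℤ) = 2 from rfl, T_two]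
    simp only [eval_sub, eval_mul, eval_pow, eval_ofNat, eval_X, eval_one]
    ring
  | more n ih₁ ih₂ =>
    change faber γ cf d (n + 3) _ = _
    simp only [faber, hF₁, hc₁] at ih₁ ih₂ ⊢
    rw [ih₁, ih₂, show ((n + 2 + 1 : ℕ) : ℤ) = (n + 1 : ℕ) + 2 by push_cast; ring, T_add_two]
    simp only [eval_sub, eval_mul, eval_ofNat, eval_X]
    push_cast
    ring

theorem eval_T_complex_cos_odd_mul_pi_div (n k : ℕ) (hn : n ≠ 0) :
    (T ℂ n).eval (Complex.cos ((1 + 2 * (k : ℂ)) * Real.pi / (2 * n))) = 0 := by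
  rw [T_complex_cos, Complex.cos_eq_zero_iff]
  refine ⟨k, ?_⟩
  field_simp
  push_cast
  ring

theorem faber_root_general (γ cf d : ℂ) (j : ℕ) (hj : 1 ≤ j) (k : ℕ) :
    faber γ cf d j
      (d + cf * Complex.cos (((1 + 2 * (k : ℂ)) * (Real.pi : ℂ)) / (2 * (j : ℂ)))) = 0 := by
  obtain ⟨n, rfl⟩ := Nat.exists_eq_add_of_le' hj
  rw [faber_succ_eval_affine, eval_T_complex_cos_odd_mul_pi_div _ _ n.succ_ne_zero, mul_zero]

/-- The `j`-th Faber polynomial vanishes at the points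
`r_k = d + cf · cos((1 + 2k)π / (2j))`, `k = 0, …, j − 1`. -/
theorem faber_root (γ cf d : ℂ) (hγ : γ ≠ 0) (j : ℕ) (hj : 1 ≤ j) (k : ℕ) (hk : k < j) :
    faber γ cf d j
      (d + cf * Complex.cos (((1 + 2 * (k : ℂ)) * (Real.pi : ℂ)) / (2 * (j : ℂ)))) = 0 :=
  faber_root_general γ cf d j hj k
end

section
/- Let γ > 0 and c_f > 0 be real numbers, let d ∈ ℂ, and set c₁ = c_f²/(4γ²). Then for every real ρ > 0 and every integer j ≥ 1, the supremum of |F_j(ψ(w))| over the circle {w ∈ ℂ : |w| = ρ} equals ρ^j + (c₁/ρ)^j, and this supremum is attained at w = ρ; in particular, the maximum modulus of the j-th Faber polynomial over the ellipse ψ({|w| = ρ}) is attained at the point ψ(ρ) where the ellipse cuts the line through its foci. -/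
/-- The conformal map associated with the Faber polynomials. -/
noncomputable def faberPsi (γ cf d : ℂ) (w : ℂ) : ℂ :=
  γ * w + d + cf ^ 2 / (4 * γ * w)

/-!
Writing `F₁(ψ(w)) = w + c₁/w`, the three-term recurrence of the Faber polynomials is the one
satisfied by the power sums `wʲ + (c₁/w)ʲ` of the two roots of `X² - F₁ X + c₁`, so
`F_j(ψ(w)) = wʲ + (c₁/w)ʲ` for `j ≥ 1`. On `|w| = ρ` the triangle inequality bounds this by
`ρʲ + (c₁/ρ)ʲ`, and since `c₁ ≥ 0` both terms are nonnegative reals at `w = ρ`, so the bound is attained.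
-/

theorem faber_succ_eq_pow_add_pow {γ cf d z w u : ℂ} (hsum : z / γ - d / γ = w + u)
    (hprod : u * w = cf ^ 2 / (4 * γ ^ 2)) (j : ℕ) :
    faber γ cf d (j + 1) z = w ^ (j + 1) + u ^ (j + 1) := by
  induction j using Nat.twoStepInduction with
  | zero => simp only [faber, hsum, zero_add, pow_one]
  | one =>
    simp only [faber, hsum, ← hprod]
    ring
  | more n ih₁ ih₂ =>
    simp only [faber] at ih₁ ih₂ ⊢
    rw [hsum, ih₁, ih₂, ← hprod]
    ring

theorem faber_faberPsi {γ : ℂ} (hγ : γ ≠ 0) (cf d : ℂ) {w : ℂ} (hw : w ≠ 0) (j : ℕ) :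
    faber γ cf d (j + 1) (faberPsi γ cf d w) =
      w ^ (j + 1) + (cf ^ 2 / (4 * γ ^ 2) / w) ^ (j + 1) := by
  refine faber_succ_eq_pow_add_pow ?_ (div_mul_cancel₀ _ hw) j
  simp only [faberPsi]
  field_simp
  ring

theorem norm_pow_add_div_pow_le (c w : ℂ) (n : ℕ) :
    ‖w ^ n + (c / w) ^ n‖ ≤ ‖w‖ ^ n + (‖c‖ / ‖w‖) ^ n := by
  simpa only [norm_pow, norm_div] using norm_add_le (w ^ n) ((c / w) ^ n)

theorem norm_ofReal_pow_add_div_pow {c r : ℝ} (hc : 0 ≤ c) (hr : 0 ≤ r) (n : ℕ) :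
    ‖(r : ℂ) ^ n + ((c : ℂ) / r) ^ n‖ = r ^ n + (c / r) ^ n := by
  rw [← Complex.ofReal_div, ← Complex.ofReal_pow, ← Complex.ofReal_pow, ← Complex.ofReal_add,
    Complex.norm_real, Real.norm_of_nonneg (by positivity)]

theorem faber_max_on_ellipse_general (γ cf : ℝ) (hγ : 0 < γ) (d : ℂ)
    (ρ : ℝ) (hρ : 0 < ρ) (j : ℕ) (hj : 1 ≤ j) :
    IsGreatest
      ((fun w : ℂ => ‖faber (γ : ℂ) (cf : ℂ) d j (faberPsi (γ : ℂ) (cf : ℂ) d w)‖) ''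
        {w : ℂ | ‖w‖ = ρ})
      (ρ ^ j + (cf ^ 2 / (4 * γ ^ 2) / ρ) ^ j) ∧
    ‖faber (γ : ℂ) (cf : ℂ) d j (faberPsi (γ : ℂ) (cf : ℂ) d (ρ : ℂ))‖ =
      ρ ^ j + (cf ^ 2 / (4 * γ ^ 2) / ρ) ^ j := by
  obtain ⟨n, rfl⟩ := Nat.exists_eq_add_of_le' hj
  set c : ℝ := cf ^ 2 / (4 * γ ^ 2) with hc_def
  have hc : 0 ≤ c := by positivity
  have hfaber (w : ℂ) (hw : w ≠ 0) :
      faber γ cf d (n + 1) (faberPsi γ cf d w) = w ^ (n + 1) + ((c : ℂ) / w) ^ (n + 1) := by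
    rw [faber_faberPsi (by exact_mod_cast hγ.ne') _ _ hw, hc_def]
    push_cast
    rfl
  have hattained : ‖faber γ cf d (n + 1) (faberPsi γ cf d ρ)‖ = ρ ^ (n + 1) + (c / ρ) ^ (n + 1) := by
    rw [hfaber ρ (by exact_mod_cast hρ.ne'), norm_ofReal_pow_add_div_pow hc hρ.le]
  refine ⟨⟨⟨ρ, by simp [hρ.le], hattained⟩, ?_⟩, hattained⟩
  rintro _ ⟨w, hw : ‖w‖ = ρ, rfl⟩
  have hw0 : w ≠ 0 := norm_pos_iff.mp (hw ▸ hρ)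
  simpa only [hfaber w hw0, hw, Complex.norm_real, Real.norm_of_nonneg hc]
    using norm_pow_add_div_pow_le c w (n + 1)

/-- For real positive parameters, the maximum modulus of the `j`-th Faber polynomial over the
ellipse `ψ({|w| = ρ})` equals `ρ^j + (c₁/ρ)^j` and is attained at the point `ψ(ρ)` where the
ellipse cuts the line through its foci. -/
theorem faber_max_on_ellipse (γ cf : ℝ) (hγ : 0 < γ) (hcf : 0 < cf) (d : ℂ)
    (ρ : ℝ) (hρ : 0 < ρ) (j : ℕ) (hj : 1 ≤ j) :
    IsGreatest
      ((fun w : ℂ => ‖faber (γ : ℂ) (cf : ℂ) d j (faberPsi (γ : ℂ) (cf : ℂ) d w)‖) ''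
        {w : ℂ | ‖w‖ = ρ})
      (ρ ^ j + (cf ^ 2 / (4 * γ ^ 2) / ρ) ^ j) ∧
    ‖faber (γ : ℂ) (cf : ℂ) d j (faberPsi (γ : ℂ) (cf : ℂ) d (ρ : ℂ))‖ =
      ρ ^ j + (cf ^ 2 / (4 * γ ^ 2) / ρ) ^ j :=
  faber_max_on_ellipse_general γ cf hγ d ρ hρ j hj
end

section
/- Let β, c, k be real numbers and let M be the 3×3 complex matrix M = [[0, c²·i·k, −c²], [i·k, −β, 0], [0, β·i·k, −β]]. Then the characteristic polynomial of M factors as X·(X + β − i·c·k)·(X + β + i·c·k); equivalently, the spectrum of M is {0, −β + i·c·k, −β − i·c·k}. -/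
open Polynomial

section PMLSymbol

variable {R : Type*} [CommRing R]

theorem isRoot_X_mul_X_add_C_mul_X_add_C_iff [NoZeroDivisors R] (a b μ : R) :
    (X * (X + C a) * (X + C b)).IsRoot μ ↔ μ = 0 ∨ μ = -a ∨ μ = -b := by
  simp [or_assoc, add_eq_zero_iff_eq_neg]

/-- The PML symbol `M`, with the imaginary unit abstracted to an arbitrary `i`. -/
def pmlSymbol (β c k i : R) : Matrix (Fin 3) (Fin 3) R :=
  !![0, c ^ 2 * i * k, -c ^ 2;
     i * k, -β, 0;
     0, β * i * k, -β]

/-- Both sides equal `X ((X + β)² - (i c k)²)`, so no relation `i² = -1` is needed. -/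
theorem charpoly_pmlSymbol (β c k i : R) :
    (pmlSymbol β c k i).charpoly = X * (X + C (β - i * c * k)) * (X + C (β + i * c * k)) := by
  rw [Matrix.charpoly, Matrix.det_fin_three]
  simp only [pmlSymbol, Matrix.charmatrix_apply_eq, Matrix.charmatrix_apply_ne, Matrix.of_apply,
    Matrix.cons_val', Matrix.cons_val, Matrix.cons_val_fin_one, Fin.reduceEq, ne_eq,
    not_false_eq_true, map_zero, map_neg, map_add, map_sub, map_mul, map_pow]
  ring

theorem spectrum_pmlSymbol {K : Type*} [Field K] (β c k i : K) :
    spectrum K (pmlSymbol β c k i) = {0, -β + i * c * k, -β - i * c * k} := by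
  ext μ
  rw [Matrix.mem_spectrum_iff_isRoot_charpoly, charpoly_pmlSymbol,
    isRoot_X_mul_X_add_C_mul_X_add_C_iff, neg_sub', sub_neg_eq_add, neg_add']
  simp only [Set.mem_insert_iff, Set.mem_singleton_iff]

end PMLSymbol

/-- The characteristic polynomial of the Fourier symbol of the 1D acoustic wave operator with
PML damping `β`, velocity `c`, at wavenumber `k`, factors as
`X (X + β − ick)(X + β + ick)`; equivalently its spectrum is `{0, −β + ick, −β − ick}`. -/
theorem charpoly_pml_symbol (β c k : ℝ) :
    (Matrix.charpoly
        (!![0, (c : ℂ) ^ 2 * Complex.I * (k : ℂ), -(c : ℂ) ^ 2;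
            Complex.I * (k : ℂ), -(β : ℂ), 0;
            0, (β : ℂ) * Complex.I * (k : ℂ), -(β : ℂ)]) =
      Polynomial.X * (Polynomial.X + Polynomial.C ((β : ℂ) - Complex.I * (c : ℂ) * (k : ℂ))) *
        (Polynomial.X + Polynomial.C ((β : ℂ) + Complex.I * (c : ℂ) * (k : ℂ)))) ∧
    spectrum ℂ
        (!![0, (c : ℂ) ^ 2 * Complex.I * (k : ℂ), -(c : ℂ) ^ 2;
            Complex.I * (k : ℂ), -(β : ℂ), 0;
            0, (β : ℂ) * Complex.I * (k : ℂ), -(β : ℂ)]) =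
      {0, -(β : ℂ) + Complex.I * (c : ℂ) * (k : ℂ),
        -(β : ℂ) - Complex.I * (c : ℂ) * (k : ℂ)} :=
  ⟨charpoly_pmlSymbol (β : ℂ) c k Complex.I, spectrum_pmlSymbol (β : ℂ) c k Complex.I⟩
end

section
/- Let H be an n×n complex matrix, p ≥ 1 an integer, and b₀, …, b_{p−1} ∈ ℂⁿ. Let W be the n×p complex matrix whose j-th column (for j = 0, …, p−1) equals b_{p−1−j}, let J be the p×p matrix with entries J_{i,j} = 1 if j = i+1 and 0 otherwise, let H̃ be the (n+p)×(n+p) block matrix [[H, W], [0, J]], and let e_p ∈ ℂ^p be the vector whose first p−1 entries are 0 and last entry is 1. For u₀ ∈ ℂⁿ define u(t) as the vector of the first n components of exp(t·H̃)·(u₀; e_p). Then u(0) = u₀ and, for every t ∈ ℝ, u is differentiable at t with u′(t) = H·u(t) + Σ_{k=0}^{p−1} (t^k/k!)·b_k; that is, the solution of the linear ODE with polynomial source term is obtained from the exponential of the slightly larger augmented matrix H̃. -/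
/-!
Let `v t = exp (t • H̃) *ᵥ (u₀; e_p)`, so that `v' = H̃ *ᵥ v` and `u` is the upper block of `v`.
Since `H̃` is block upper triangular, the lower block of `v t` is `exp (t • J) *ᵥ e_p`, and as `J`
shifts coordinates up by one, `J ^ k *ᵥ e_p` is the basis vector at index `p - 1 - k`; hence the
lower block of `v t` has entries `t ^ (p - 1 - j) / (p - 1 - j)!`. The upper block of `H̃ *ᵥ v t`
is then `H *ᵥ u t + W *ᵥ (lower block) = H *ᵥ u t + ∑ k, (t ^ k / k!) • b k`.
-/

open Matrix NormedSpace
open scoped Nat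

namespace Matrix

variable {𝕂 : Type*} [RCLike 𝕂]

section Exp

-- Matrices have no canonical norm; this one induces the product topology, which is all that
-- the statements below refer to.
attribute [local instance] Matrix.linftyOpNormedRing Matrix.linftyOpNormedAlgebra

variable {m : Type*} [Fintype m] [DecidableEq m]

theorem hasSum_exp_mulVec (A : Matrix m m 𝕂) (v : m → 𝕂) :
    HasSum (fun k : ℕ => (k !⁻¹ : 𝕂) • (A ^ k *ᵥ v)) (exp A *ᵥ v) := by
  have hcont : Continuous (mulVec.addMonoidHomLeft (m := m) v) :=
    continuous_id.matrix_mulVec continuous_const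
  have h := (exp_series_hasSum_exp' (𝕂 := 𝕂) A).map _ hcont
  simp only [Function.comp_def, mulVec.addMonoidHomLeft, AddMonoidHom.coe_mk, ZeroHom.coe_mk,
    smul_mulVec] at h
  exact h

theorem hasDerivAt_exp_smul_mulVec (A : Matrix m m 𝕂) (v : m → 𝕂) (t : ℝ) :
    HasDerivAt (fun s : ℝ => exp ((s : 𝕂) • A) *ᵥ v) (A *ᵥ (exp ((t : 𝕂) • A) *ᵥ v)) t := by
  let L : Matrix m m 𝕂 →L[ℝ] (m → 𝕂) :=
    LinearMap.toContinuousLinearMap ((mulVecBilin ℝ ℝ (A := 𝕂) (m := m) (n := m)).flip v)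
  have h := L.hasFDerivAt.comp_hasDerivAt t (hasDerivAt_exp_smul_const' (𝕂 := ℝ) A t)
  simp only [Function.comp_def, L, LinearMap.coe_toContinuousLinearMap', LinearMap.flip_apply,
    mulVecBilin_apply, RCLike.real_smul_eq_coe_smul (K := 𝕂)] at h
  rw [mulVec_mulVec]
  exact h

end Exp

section Blocks

variable {n p : Type*} [Fintype n] [DecidableEq n] [Fintype p] [DecidableEq p]

theorem fromBlocks_zero₂₁_pow {R : Type*} [Semiring R] (A : Matrix n n R) (B : Matrix n p R)
    (D : Matrix p p R) (k : ℕ) :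
    ∃ B' : Matrix n p R, fromBlocks A B 0 D ^ k = fromBlocks (A ^ k) B' 0 (D ^ k) := by
  induction k with
  | zero => exact ⟨0, by simp⟩
  | succ k ih =>
    obtain ⟨B', hB'⟩ := ih
    exact ⟨A ^ k * B + B' * D, by simp [pow_succ, hB', fromBlocks_multiply]⟩

theorem exp_fromBlocks_zero₂₁_mulVec_inr (A : Matrix n n 𝕂) (B : Matrix n p 𝕂)
    (D : Matrix p p 𝕂) (x : n → 𝕂) (y : p → 𝕂) (i : p) :
    (exp (fromBlocks A B 0 D) *ᵥ Sum.elim x y) (Sum.inr i) = (exp D *ᵥ y) i := by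
  have hpow (k : ℕ) : (fromBlocks A B 0 D ^ k *ᵥ Sum.elim x y) (Sum.inr i) = (D ^ k *ᵥ y) i := by
    obtain ⟨B', hB'⟩ := fromBlocks_zero₂₁_pow A B D k
    simp [hB', fromBlocks_mulVec]
  have hM := Pi.hasSum.1 (hasSum_exp_mulVec (fromBlocks A B 0 D) (Sum.elim x y)) (Sum.inr i)
  simp only [Pi.smul_apply, hpow] at hM
  exact hM.unique (Pi.hasSum.1 (hasSum_exp_mulVec D y) i)

end Blocks

section Shift

def shiftUp (R : Type*) [Zero R] [One R] (p : ℕ) : Matrix (Fin p) (Fin p) R :=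
  of fun i j => if (j : ℕ) = i + 1 then 1 else 0

variable {R : Type*} [Semiring R] {p : ℕ}

theorem shiftUp_mulVec_apply (y : Fin p → R) (i : Fin p) :
    (shiftUp R p *ᵥ y) i = if h : (i : ℕ) + 1 < p then y ⟨i + 1, h⟩ else 0 := by
  split_ifs with h
  · rw [mulVec, dotProduct, Finset.sum_eq_single ⟨i + 1, h⟩] <;>
      simp +contextual [shiftUp, Fin.ext_iff]
  · simp only [mulVec, dotProduct, shiftUp, of_apply, ite_mul, one_mul, zero_mul]
    exact Finset.sum_eq_zero fun j _ => if_neg (by omega)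

theorem shiftUp_pow_mulVec_apply (k : ℕ) (y : Fin p → R) (i : Fin p) :
    (shiftUp R p ^ k *ᵥ y) i = if h : (i : ℕ) + k < p then y ⟨i + k, h⟩ else 0 := by
  induction k generalizing y with
  | zero => simp
  | succ k ih =>
    rw [pow_succ, ← mulVec_mulVec, ih]
    simp only [shiftUp_mulVec_apply, ← add_assoc]
    split_ifs <;> first | rfl | omega

theorem exp_smul_shiftUp_mulVec_apply (c : 𝕂) (i : Fin p) :
    (exp (c • shiftUp 𝕂 p) *ᵥ fun j : Fin p => if (j : ℕ) = p - 1 then 1 else 0) i =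
      c ^ (i.rev : ℕ) / (i.rev : ℕ)! := by
  have hterm (k : ℕ) : (k !⁻¹ : 𝕂) • ((c • shiftUp 𝕂 p) ^ k *ᵥ
      fun j : Fin p => if (j : ℕ) = p - 1 then 1 else 0) i =
      if k = i.rev then c ^ (i.rev : ℕ) / (i.rev : ℕ)! else 0 := by
    rw [smul_pow, smul_mulVec, Pi.smul_apply, shiftUp_pow_mulVec_apply]
    by_cases hk : k = i.rev
    · have hik : (i : ℕ) + k = p - 1 := by rw [hk, Fin.val_rev]; omega
      rw [dif_pos (by omega), if_pos hik, if_pos hk, ← hk, smul_eq_mul, smul_eq_mul, mul_one,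
        div_eq_inv_mul]
    · have hik : (i : ℕ) + k ≠ p - 1 := by rw [Fin.val_rev] at hk; omega
      rw [if_neg hk]
      simp [hik]
  have h := Pi.hasSum.1 (hasSum_exp_mulVec (c • shiftUp 𝕂 p)
    fun j : Fin p => if (j : ℕ) = p - 1 then 1 else 0) i
  simp only [Pi.smul_apply, hterm] at h
  exact h.unique (hasSum_ite_eq _ _)

end Shift

theorem mulVec_of_rev {R n : Type*} [CommSemiring R] {p : ℕ} (b : Fin p → n → R)
    (c : Fin p → R) :
    (of fun i j => b j.rev i : Matrix n (Fin p) R) *ᵥ (fun j => c j.rev) = ∑ k, c k • b k := by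
  ext i
  simp only [mulVec, dotProduct, of_apply, Finset.sum_apply, Pi.smul_apply, smul_eq_mul]
  rw [← Equiv.sum_comp Fin.revPerm (fun k => c k * b k i)]
  simp only [Fin.revPerm_apply, mul_comm]

end Matrix

/-- The solution of the linear ODE `u′ = H u + Σ_{k<p} (t^k/k!) bₖ`, with `u(0) = u₀`, is
obtained from the exponential of the augmented matrix `H̃ = [[H, W], [0, J]]` applied to the
vector `(u₀; e_p)`. -/
theorem augmented_matrix_exp_solves_ode (n p : ℕ)
    (H : Matrix (Fin n) (Fin n) ℂ) (b : Fin p → Fin n → ℂ) (u₀ : Fin n → ℂ) :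
    let W : Matrix (Fin n) (Fin p) ℂ :=
      fun i j => b ⟨p - 1 - (j : ℕ), by have := j.isLt; omega⟩ i
    let J : Matrix (Fin p) (Fin p) ℂ := fun i j => if (j : ℕ) = (i : ℕ) + 1 then 1 else 0
    let Htilde : Matrix (Fin n ⊕ Fin p) (Fin n ⊕ Fin p) ℂ := Matrix.fromBlocks H W 0 J
    let ep : Fin p → ℂ := fun i => if (i : ℕ) = p - 1 then 1 else 0
    let u : ℝ → Fin n → ℂ := fun t i =>
      ((NormedSpace.exp ((t : ℂ) • Htilde)) *ᵥ Sum.elim u₀ ep) (Sum.inl i)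
    u 0 = u₀ ∧ ∀ t : ℝ,
      HasDerivAt u
        (H *ᵥ u t + ∑ k : Fin p, ((t : ℂ) ^ (k : ℕ) / (Nat.factorial k : ℂ)) • b k) t := by
  intro W J Htilde ep u
  have hW : W = of fun i j => b j.rev i := by
    ext i j
    simp only [W, of_apply, Fin.rev]
    congr 2
    omega
  have hsource (t : ℝ) : W *ᵥ ((exp ((t : ℂ) • Htilde) *ᵥ Sum.elim u₀ ep) ∘ Sum.inr) =
      ∑ k : Fin p, ((t : ℂ) ^ (k : ℕ) / (k : ℕ)!) • b k := by
    have hinr : (exp ((t : ℂ) • Htilde) *ᵥ Sum.elim u₀ ep) ∘ Sum.inr =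
        fun j => (t : ℂ) ^ (j.rev : ℕ) / (j.rev : ℕ)! := by
      funext j
      rw [Function.comp_apply, fromBlocks_smul, smul_zero, exp_fromBlocks_zero₂₁_mulVec_inr]
      exact exp_smul_shiftUp_mulVec_apply (t : ℂ) j
    rw [hinr, hW]
    exact mulVec_of_rev b fun k => (t : ℂ) ^ (k : ℕ) / (k : ℕ)!
  refine ⟨?_, fun t => ?_⟩
  · funext i
    simp [u]
  · have hv := hasDerivAt_exp_smul_mulVec Htilde (Sum.elim u₀ ep) t
    have hu : HasDerivAt u ((Htilde *ᵥ (exp ((t : ℂ) • Htilde) *ᵥ Sum.elim u₀ ep)) ∘ Sum.inl) t :=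
      hasDerivAt_pi.2 fun i => hasDerivAt_pi.1 hv (Sum.inl i)
    rwa [fromBlocks_mulVec, Sum.elim_comp_inl, hsource] at hu
end

section
/- Let θ and α be real numbers, and define g₁ = e^{−2iθ} − e^{iθ} + 27·(1 − e^{−iθ}) and g₂ = e^{−iθ} − e^{2iθ} + 27·(e^{iθ} − 1). Then g₂ = −conj(g₁), and the 2×2 complex matrix (α/24)·[[0, g₁], [g₂, 0]] has spectrum {i·α·|g₁|/24, −i·α·|g₁|/24}; in particular all eigenvalues of this matrix are purely imaginary. -/
/-!
Conjugating the exponentials term by term gives `g₂ = -conj g₁`, so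
`g₁ g₂ = -‖g₁‖²`. The scaled matrix is antidiagonal with characteristic polynomial
`μ² - (α/24)² g₁ g₂ = μ² - (i α ‖g₁‖ / 24)²`, whose roots are `±i α ‖g₁‖ / 24`.
-/

namespace Matrix

variable {K : Type*} [Field K]

theorem smul_antidiagonal_fin_two (c a b : K) :
    c • !![0, a; b, 0] = !![0, c * a; c * b, 0] := by
  simp [smul_of, smul_cons, smul_empty]

theorem spectrum_antidiagonal_fin_two {a b z : K} (h : a * b = z ^ 2) :
    spectrum K !![0, a; b, 0] = {z, -z} := by
  ext μ
  rw [mem_spectrum_iff_isRoot_charpoly, charpoly_fin_two, Polynomial.IsRoot.def]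
  simp [h, ← sub_eq_add_neg, sub_eq_zero, sq_eq_sq_iff_eq_or_eq_neg]

end Matrix

theorem fourthOrder_symbol_eq_neg_conj (θ : ℝ) :
    Complex.exp (-(θ : ℂ) * Complex.I) - Complex.exp (2 * (θ : ℂ) * Complex.I) +
        27 * (Complex.exp ((θ : ℂ) * Complex.I) - 1) =
      -(starRingEnd ℂ) (Complex.exp (-2 * (θ : ℂ) * Complex.I) -
        Complex.exp ((θ : ℂ) * Complex.I) + 27 * (1 - Complex.exp (-(θ : ℂ) * Complex.I))) := by
  simp only [map_add, map_sub, map_mul, map_one, map_ofNat, ← Complex.exp_conj, map_neg,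
    Complex.conj_ofReal, Complex.conj_I]
  ring_nf

/-- For the Fourier symbol of the fourth-order staggered-grid discretization of the 1D acoustic
wave equation, `g₂ = −conj(g₁)`, and the matrix `(α/24)·[[0, g₁],[g₂, 0]]` has purely imaginary
spectrum `{iα|g₁|/24, −iα|g₁|/24}`. -/
theorem fourth_order_symbol_spectrum (θ α : ℝ) :
    let g₁ : ℂ := Complex.exp (-2 * (θ : ℂ) * Complex.I) - Complex.exp ((θ : ℂ) * Complex.I) +
      27 * (1 - Complex.exp (-(θ : ℂ) * Complex.I))
    let g₂ : ℂ := Complex.exp (-(θ : ℂ) * Complex.I) - Complex.exp (2 * (θ : ℂ) * Complex.I) +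
      27 * (Complex.exp ((θ : ℂ) * Complex.I) - 1)
    g₂ = -(starRingEnd ℂ) g₁ ∧
      spectrum ℂ (((α : ℂ) / 24) • !![0, g₁; g₂, 0]) =
        {Complex.I * ((α * ‖g₁‖ / 24 : ℝ) : ℂ),
          -(Complex.I * ((α * ‖g₁‖ / 24 : ℝ) : ℂ))} := by
  intro g₁ g₂
  have hconj : g₂ = -(starRingEnd ℂ) g₁ := fourthOrder_symbol_eq_neg_conj θ
  refine ⟨hconj, ?_⟩
  rw [Matrix.smul_antidiagonal_fin_two, Matrix.spectrum_antidiagonal_fin_two]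
  rw [hconj]
  push_cast
  linear_combination (-((α : ℂ) / 24) ^ 2) * Complex.mul_conj' g₁ -
    ((α : ℂ) * ‖g₁‖ / 24) ^ 2 * Complex.I_sq
end
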